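/- arXiv:2103.15817 — 2 statements merged into one kernel-verified Lean document; each statement's English description precedes it below -/
import Mathlib

section
/- Fix n ≥ 3, 2 ≤ p < n and q = np/(n−p) − 1. For positive parameters a, b and a center y ∈ ℝⁿ, the Talenti function Y_{a,b,y}(x) = (a + b |x − y|^{p/(p−1)})^{−(n−p)/p} satisfies −Δ_p Y_{a,b,y} = n ((n−p)/(p−1))^{p−1} a b^{p−1} (Y_{a,b,y})^q on ℝⁿ ∖ {y}, where Δ_p u = div(|∇u|^{p−2} ∇u). -/
/-- The `p`-Laplacian `Δ_p u = div(|∇u|^{p-2} ∇u)`, computed classically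
coordinatewise via Fréchet derivatives. -/
noncomputable def pLap {n : ℕ} (p : ℝ) (u : EuclideanSpace ℝ (Fin n) → ℝ)
    (x : EuclideanSpace ℝ (Fin n)) : ℝ :=
  ∑ i : Fin n,
    fderiv ℝ (fun z => ‖gradient u z‖ ^ (p - 2) * fderiv ℝ u z (EuclideanSpace.single i 1)) x
      (EuclideanSpace.single i 1)

/-! For a radial function `u = f(|x - y|)` the flux `|∇u|^{p-2} ∇u` is the radial field
`h(r) (x - y)` with `r h(r) = |f'(r)|^{p-2} f'(r)`, and the divergence of such a field is
`n h(r) + r h'(r)`. For the Talenti profile `f(r) = (a + b r^m)^{-k}` with `m = p/(p-1)` and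
`k = (n-p)/p`, the relation `(m-1)(p-1) = 1` gives `h(r) = -(kbm)^{p-1} (a + b r^m)^{-β}` with
`β = (k+1)(p-1)`. Since `βm = n`, the `r^m` terms of `n h + r h'` cancel, leaving
`-n a (kbm)^{p-1} (a + b r^m)^{-β-1}`; finally `kbm = (n-p)b/(p-1)` and `kq = β + 1`. -/

open Real Filter Topology InnerProductSpace

section Radial

variable {F : Type*} [NormedAddCommGroup F] [InnerProductSpace ℝ F] [CompleteSpace F]

theorem hasGradientAt_norm {x : F} (hx : x ≠ 0) : HasGradientAt (‖·‖) (‖x‖⁻¹ • x) x := by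
  have h := (hasStrictFDerivAt_norm_sq x).hasFDerivAt.sqrt (by positivity)
  simp only [Real.sqrt_sq (norm_nonneg _)] at h
  rw [hasGradientAt_iff_hasFDerivAt]
  refine h.congr_fderiv (ContinuousLinearMap.ext fun v => ?_)
  simp only [one_div, mul_inv_rev, smul_apply, coe_innerSL_apply, nsmul_eq_mul, Nat.cast_ofNat,
    smul_eq_mul, map_smul, toDual_apply_apply]
  field_simp

theorem HasDerivAt.hasGradientAt_comp_norm_sub {f : ℝ → ℝ} {f' : ℝ} {x y : F} (hx : x ≠ y)
    (hf : HasDerivAt f f' ‖x - y‖) :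
    HasGradientAt (fun z => f ‖z - y‖) ((f' / ‖x - y‖) • (x - y)) x := by
  have h := hf.comp_hasFDerivAt x
    ((hasGradientAt_norm (sub_ne_zero.mpr hx)).hasFDerivAt.comp x
      ((hasFDerivAt_id x).sub_const y))
  rw [hasGradientAt_iff_hasFDerivAt]
  refine h.congr_fderiv (ContinuousLinearMap.ext fun v => ?_)
  simp only [map_smul, map_sub, ContinuousLinearMap.comp_id, smul_apply, sub_apply,
    toDual_apply_apply, smul_eq_mul]
  ring

end Radial

section Euclidean

variable {n : ℕ}

noncomputable def divergence (V : EuclideanSpace ℝ (Fin n) → EuclideanSpace ℝ (Fin n))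
    (x : EuclideanSpace ℝ (Fin n)) : ℝ :=
  ∑ i : Fin n, fderiv ℝ (fun z => V z i) x (EuclideanSpace.single i 1)

theorem fderiv_apply_single (u : EuclideanSpace ℝ (Fin n) → ℝ) (z : EuclideanSpace ℝ (Fin n))
    (i : Fin n) : fderiv ℝ u z (EuclideanSpace.single i 1) = gradient u z i := by
  rw [gradient, ← toDual_symm_apply, EuclideanSpace.inner_single_right]
  simp

theorem pLap_eq_divergence (p : ℝ) (u : EuclideanSpace ℝ (Fin n) → ℝ)
    (x : EuclideanSpace ℝ (Fin n)) :
    pLap p u x = divergence (fun z => ‖gradient u z‖ ^ (p - 2) • gradient u z) x := by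
  simp only [pLap, divergence, PiLp.smul_apply, smul_eq_mul, ← fderiv_apply_single]

theorem divergence_congr {V W : EuclideanSpace ℝ (Fin n) → EuclideanSpace ℝ (Fin n)}
    {x : EuclideanSpace ℝ (Fin n)} (h : V =ᶠ[𝓝 x] W) : divergence V x = divergence W x := by
  refine Finset.sum_congr rfl fun i _ => ?_
  have hi : (fun z => V z i) =ᶠ[𝓝 x] fun z => W z i := h.mono fun z hz => by simp only [hz]
  rw [hi.fderiv_eq]

theorem divergence_radial_smul_sub {h : ℝ → ℝ} {h' : ℝ} {x y : EuclideanSpace ℝ (Fin n)}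
    (hx : x ≠ y) (hh : HasDerivAt h h' ‖x - y‖) :
    divergence (fun z => h ‖z - y‖ • (z - y)) x = n * h ‖x - y‖ + ‖x - y‖ * h' := by
  have hr : 0 < ‖x - y‖ := norm_pos_iff.mpr (sub_ne_zero.mpr hx)
  have hcoord (i : Fin n) : HasFDerivAt (fun z : EuclideanSpace ℝ (Fin n) => (z - y) i)
      (PiLp.proj (𝕜 := ℝ) 2 (fun _ : Fin n => ℝ) i) x :=
    ((PiLp.proj (𝕜 := ℝ) 2 (fun _ : Fin n => ℝ) i).hasFDerivAt.sub_const (y i))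
  have hcomp (i : Fin n) : fderiv ℝ (fun z => (h ‖z - y‖ • (z - y)) i) x
      (EuclideanSpace.single i 1) = h ‖x - y‖ + h' / ‖x - y‖ * (x - y) i ^ 2 := by
    have hprod := ((hh.hasGradientAt_comp_norm_sub hx).hasFDerivAt).fun_mul (hcoord i)
    simp only [PiLp.smul_apply, smul_eq_mul]
    rw [hprod.fderiv]
    simp only [PiLp.sub_apply, map_smul, map_sub, add_apply, smul_apply, PiLp.proj_apply,
      PiLp.single_eq_same, smul_eq_mul, mul_one, sub_apply, toDual_apply_apply,
      EuclideanSpace.inner_single_right, ringHom_apply, one_mul, add_right_inj]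
    ring
  have hsq : ∑ i : Fin n, (x - y) i ^ 2 = ‖x - y‖ ^ 2 := by
    rw [EuclideanSpace.norm_sq_eq]
    simp
  simp only [divergence, hcomp, Finset.sum_add_distrib, ← Finset.mul_sum, hsq, Finset.sum_const,
    Finset.card_univ, Fintype.card_fin, nsmul_eq_mul, add_right_inj]
  field_simp

theorem pLap_radial {p h' : ℝ} {f f' h : ℝ → ℝ} {x y : EuclideanSpace ℝ (Fin n)}
    (hx : x ≠ y) (hf : ∀ s, 0 < s → HasDerivAt f (f' s) s)
    (hflux : ∀ s, 0 < s → |f' s| ^ (p - 2) * f' s = s * h s) (hh : HasDerivAt h h' ‖x - y‖) :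
    pLap p (fun z => f ‖z - y‖) x = n * h ‖x - y‖ + ‖x - y‖ * h' := by
  rw [pLap_eq_divergence, ← divergence_radial_smul_sub hx hh]
  refine divergence_congr (eventually_ne_nhds hx |>.mono fun z hz => ?_)
  have hr : 0 < ‖z - y‖ := norm_pos_iff.mpr (sub_ne_zero.mpr hz)
  dsimp only
  rw [((hf _ hr).hasGradientAt_comp_norm_sub hz).gradient, norm_smul, smul_smul, norm_div,
    norm_norm, div_mul_cancel₀ _ hr.ne', Real.norm_eq_abs, ← mul_div_assoc, hflux _ hr,
    mul_div_cancel_left₀ _ hr.ne']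

theorem hasDerivAt_add_mul_rpow_rpow {a b m e s : ℝ} (ha : 0 < a) (hb : 0 ≤ b) (hs : 0 < s) :
    HasDerivAt (fun t => (a + b * t ^ m) ^ e)
      (e * b * m * s ^ (m - 1) * (a + b * s ^ m) ^ (e - 1)) s := by
  have hA : 0 < a + b * s ^ m := by positivity
  exact ((((hasDerivAt_rpow_const (Or.inl hs.ne')).const_mul b).const_add a).rpow_const
    (Or.inl hA.ne')).congr_deriv (by ring)

theorem talenti_flux {a b k m p s : ℝ} (ha : 0 < a) (hb : 0 < b) (hk : 0 < k) (hm : 0 < m)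
    (hs : 0 < s) (hmp : (m - 1) * (p - 1) = 1) :
    |-k * b * m * s ^ (m - 1) * (a + b * s ^ m) ^ (-k - 1)| ^ (p - 2)
        * (-k * b * m * s ^ (m - 1) * (a + b * s ^ m) ^ (-k - 1))
      = s * -((k * b * m) ^ (p - 1) * (a + b * s ^ m) ^ (-((k + 1) * (p - 1)))) := by
  have hA : 0 < a + b * s ^ m := by positivity
  set X := k * b * m * s ^ (m - 1) * (a + b * s ^ m) ^ (-k - 1) with hX
  have hX0 : 0 < X := by positivity
  have hXp :
      X ^ (p - 1) = (k * b * m) ^ (p - 1) * s * (a + b * s ^ m) ^ (-((k + 1) * (p - 1))) := by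
    rw [hX, mul_rpow (by positivity) (by positivity), mul_rpow (by positivity) (by positivity),
      ← rpow_mul hs.le, hmp, rpow_one, ← rpow_mul hA.le]
    ring_nf
  have hneg : -k * b * m * s ^ (m - 1) * (a + b * s ^ m) ^ (-k - 1) = -X := by ring
  rw [hneg, abs_neg, abs_of_pos hX0, mul_neg, ← rpow_add_one hX0.ne',
    show p - 2 + 1 = p - 1 by ring, hXp]
  ring

theorem pLap_talenti {a b k m p : ℝ} (ha : 0 < a) (hb : 0 < b) (hk : 0 < k) (hm : 0 < m)
    (hmp : (m - 1) * (p - 1) = 1) (hn : (k + 1) * (p - 1) * m = n)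
    {x y : EuclideanSpace ℝ (Fin n)} (hx : x ≠ y) :
    -pLap p (fun z => (a + b * ‖z - y‖ ^ m) ^ (-k)) x
      = n * a * (k * b * m) ^ (p - 1) * (a + b * ‖x - y‖ ^ m) ^ (-((k + 1) * (p - 1)) - 1) := by
  have hr : 0 < ‖x - y‖ := norm_pos_iff.mpr (sub_ne_zero.mpr hx)
  rw [pLap_radial hx (fun s hs => hasDerivAt_add_mul_rpow_rpow ha hb.le hs)
    (fun s hs => talenti_flux ha hb hk hm hs hmp)
    ((hasDerivAt_add_mul_rpow_rpow ha hb.le hr).const_mul _).neg]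
  set C := (k * b * m) ^ (p - 1)
  set β := (k + 1) * (p - 1)
  set r := ‖x - y‖
  set A := a + b * r ^ m with hAdef
  have hA : 0 < A := by positivity
  have hrm : r * r ^ (m - 1) = r ^ m := by
    rw [← rpow_one_add' hr.le (by linarith), add_sub_cancel]
  have hAβ : A ^ (-β) = A ^ (-β - 1) * A := by
    rw [← rpow_add_one hA.ne', sub_add_cancel]
  linear_combination ((n : ℝ) * C) * hAβ - (C * β * b * m * A ^ (-β - 1)) * hrm
    - (C * b * r ^ m * A ^ (-β - 1)) * hn + ((n : ℝ) * C * A ^ (-β - 1)) * hAdef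

end Euclidean

theorem talenti_equation_general (n : ℕ) (p q a b : ℝ)
    (hp : 2 ≤ p) (hpn : p < n) (hq : q = n * p / (n - p) - 1)
    (ha : 0 < a) (hb : 0 < b)
    (y : EuclideanSpace ℝ (Fin n)) (Y : EuclideanSpace ℝ (Fin n) → ℝ)
    (hY : ∀ x, Y x = (a + b * ‖x - y‖ ^ (p / (p - 1))) ^ (-((n - p) / p))) :
    ∀ x, x ≠ y →
      -pLap p Y x = n * ((n - p) / (p - 1)) ^ (p - 1) * a * b ^ (p - 1) * Y x ^ q := by
  intro x hx
  have hp1 : 0 < p - 1 := by linarith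
  have hnp : 0 < n - p := by linarith
  have hmp : (p / (p - 1) - 1) * (p - 1) = 1 := by field_simp; ring
  have hn : ((n - p) / p + 1) * (p - 1) * (p / (p - 1)) = n := by field_simp; ring
  have hkbm : (n - p) / p * b * (p / (p - 1)) = (n - p) / (p - 1) * b := by field_simp
  have hkq : -((n - p) / p) * q = -(((n - p) / p + 1) * (p - 1)) - 1 := by
    rw [hq]; field_simp; ring
  rw [funext hY, pLap_talenti ha hb (by positivity) (by positivity) hmp hn hx,
    ← rpow_mul (by positivity), hkq, hkbm, mul_rpow (by positivity) hb.le]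
  ring

/-- The Talenti function `Y_{a,b,y}(x) = (a + b|x-y|^{p/(p-1)})^{-(n-p)/p}` satisfies
`-Δ_p Y = n((n-p)/(p-1))^{p-1} a b^{p-1} Y^q` away from the center `y`. -/
theorem talenti_equation (n : ℕ) (hn : 3 ≤ n) (p q a b : ℝ)
    (hp : 2 ≤ p) (hpn : p < n) (hq : q = n * p / (n - p) - 1)
    (ha : 0 < a) (hb : 0 < b)
    (y : EuclideanSpace ℝ (Fin n)) (Y : EuclideanSpace ℝ (Fin n) → ℝ)
    (hY : ∀ x, Y x = (a + b * ‖x - y‖ ^ (p / (p - 1))) ^ (-((n - p) / p))) :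
    ∀ x, x ≠ y →
      -pLap p Y x = n * ((n - p) / (p - 1)) ^ (p - 1) * a * b ^ (p - 1) * Y x ^ q :=
  talenti_equation_general n p q a b hp hpn hq ha hb y Y hY
end

section
/- Let n ≥ 3, 2 ≤ p < n, q = np/(n−p) − 1. Suppose v: Ω × [0, S*] → [0,∞) and γ: [0,T] → (0,∞), s: [0,T] → [0,S*] are C¹ with s'(t) = γ(t)^{(q+1)p/n} and γ'(t) = −(1/q) γ(t) ∫_Ω |∇u(x,t)|^p dx where u(x,t) := v(x, s(t))/γ(t). If v satisfies ∂_s(v^q) = Δ_p v classically, then u satisfies ∂_t(u^q) − Δ_p u = (∫_Ω |∇u(x,t)|^p dx) u^q classically. -/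
open MeasureTheory Topology

theorem gradient_const_smul_field {E : Type*} [NormedAddCommGroup E] [InnerProductSpace ℝ E]
    [CompleteSpace E] (c : ℝ) (w : E → ℝ) (z : E) :
    gradient (c • w) z = c • gradient w z := by
  rw [gradient, fderiv_const_smul_field, Pi.smul_apply, map_smul, gradient]

theorem pLap_const_smul {n : ℕ} {p c : ℝ} (hc : 0 < c) (w : EuclideanSpace ℝ (Fin n) → ℝ)
    (x : EuclideanSpace ℝ (Fin n)) :
    pLap p (c • w) x = c ^ (p - 1) * pLap p w x := by
  rw [pLap, pLap, Finset.mul_sum]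
  refine Finset.sum_congr rfl fun i _ => ?_
  have hflux : (fun z => ‖gradient (c • w) z‖ ^ (p - 2) *
        fderiv ℝ (c • w) z (EuclideanSpace.single i 1)) =
      c ^ (p - 1) • fun z => ‖gradient w z‖ ^ (p - 2) * fderiv ℝ w z (EuclideanSpace.single i 1) := by
    ext z
    have hpow : c ^ (p - 1) = c ^ (p - 2) * c := by
      rw [← Real.rpow_add_one hc.ne']; ring_nf
    simp only [gradient_const_smul_field, fderiv_const_smul_field, norm_smul,
      Real.norm_of_nonneg hc.le, Real.mul_rpow hc.le (norm_nonneg _), Pi.smul_apply,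
      FunLike.coe_smul, smul_eq_mul, hpow]
    ring
  rw [hflux, fderiv_const_smul_field]
  rfl

theorem hasDerivAt_rpow_comp_div {f s γ : ℝ → ℝ} {q L s' γ' t : ℝ} (hf : ∀ σ, 0 ≤ f σ)
    (hγ : 0 < γ t) (hfq : HasDerivAt (fun σ => f σ ^ q) L (s t)) (hs : HasDerivAt s s' t)
    (hγd : HasDerivAt γ γ' t) :
    HasDerivAt (fun τ => (f (s τ) / γ τ) ^ q)
      (γ t ^ (-q) * (L * s') - q * γ' / γ t * (f (s t) / γ t) ^ q) t := by
  have hloc : (fun τ => (f (s τ) / γ τ) ^ q) =ᶠ[𝓝 t] fun τ => γ τ ^ (-q) * f (s τ) ^ q := by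
    filter_upwards [hγd.continuousAt.eventually (Ioi_mem_nhds hγ)] with τ hτ
    rw [Real.div_rpow (hf _) hτ.le, Real.rpow_neg hτ.le, div_eq_inv_mul]
  refine (((hγd.rpow_const (Or.inl hγ.ne')).mul (hfq.comp t hs)).congr_of_eventuallyEq
    hloc).congr_deriv ?_
  rw [Function.comp_apply, Real.div_rpow (hf _) hγ.le, Real.rpow_sub_one hγ.ne',
    Real.rpow_neg hγ.le]
  field_simp
  ring

theorem sobolev_exponent_identity {n p q : ℝ} (hn : n ≠ 0) (hpn : n - p ≠ 0)
    (hq : q = n * p / (n - p) - 1) : p - 1 + (q + 1) * p / n = q := by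
  subst hq
  field_simp
  ring

theorem intrinsic_scaling_transforms_general (n : ℕ) (p q T : ℝ)
    (hp : 2 ≤ p) (hpn : p < n) (hq : q = n * p / (n - p) - 1)
    (Ω : Set (EuclideanSpace ℝ (Fin n)))
    (v u : EuclideanSpace ℝ (Fin n) → ℝ → ℝ) (γ s : ℝ → ℝ)
    (hvnn : ∀ x σ, 0 ≤ v x σ)
    (hγpos : ∀ t ∈ Set.Icc 0 T, 0 < γ t)
    (hu : ∀ x t, u x t = v x (s t) / γ t)
    (hs' : ∀ t ∈ Set.Icc 0 T, HasDerivAt s (γ t ^ ((q + 1) * p / n)) t)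
    (hγ' : ∀ t ∈ Set.Icc 0 T,
      HasDerivAt γ (-(1 / q) * γ t * ∫ x in Ω, ‖gradient (fun z => u z t) x‖ ^ p) t)
    (hv : ∀ x σ, HasDerivAt (fun σ => v x σ ^ q) (pLap p (fun z => v z σ) x) σ) :
    ∀ x, ∀ t ∈ Set.Icc 0 T,
      HasDerivAt (fun τ => u x τ ^ q)
        (pLap p (fun z => u z t) x +
          (∫ x in Ω, ‖gradient (fun z => u z t) x‖ ^ p) * u x t ^ q) t := by
  intro x t ht
  have hγt := hγpos t ht
  have hexp : p - 1 + (q + 1) * p / n = q :=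
    sobolev_exponent_identity (by linarith) (by linarith) hq
  have hq0 : q ≠ 0 := by
    rw [hq, sub_ne_zero, ne_eq, div_eq_one_iff_eq (by linarith)]
    nlinarith
  have hv_scaled : (fun z => v z (s t)) = γ t • fun z => u z t := by
    ext z
    rw [Pi.smul_apply, smul_eq_mul, hu, mul_div_cancel₀ _ hγt.ne']
  have hderiv := hasDerivAt_rpow_comp_div (hvnn x) hγt (hv x (s t)) (hs' t ht) (hγ' t ht)
  simp only [← hu, hv_scaled, pLap_const_smul hγt] at hderiv
  convert hderiv using 1
  have hpow : γ t ^ (-q) * (γ t ^ (p - 1) * γ t ^ ((q + 1) * p / n)) = 1 := by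
    rw [← Real.rpow_add hγt, ← Real.rpow_add hγt, hexp, neg_add_cancel, Real.rpow_zero]
  have hdecay : q * (-(1 / q) * γ t * ∫ x in Ω, ‖gradient (fun z => u z t) x‖ ^ p) / γ t =
      -∫ x in Ω, ‖gradient (fun z => u z t) x‖ ^ p := by
    field_simp
  rw [hdecay]
  linear_combination -(pLap p (fun z => u z t) x) * hpow

/-- Nonlinear intrinsic scaling: if `v` solves `∂_s(v^q) = Δ_p v` classically,
`s'(t) = γ(t)^{(q+1)p/n}` and `γ'(t) = -(1/q) γ(t) ∫_Ω |∇u(t)|^p`, then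
`u(x,t) = v(x,s(t))/γ(t)` solves `∂_t(u^q) - Δ_p u = (∫_Ω |∇u(t)|^p) u^q`. -/
theorem intrinsic_scaling_transforms (n : ℕ) (hn : 3 ≤ n) (p q T : ℝ)
    (hp : 2 ≤ p) (hpn : p < n) (hq : q = n * p / (n - p) - 1) (hT : 0 < T)
    (Ω : Set (EuclideanSpace ℝ (Fin n)))
    (v u : EuclideanSpace ℝ (Fin n) → ℝ → ℝ) (γ s : ℝ → ℝ)
    (hvnn : ∀ x σ, 0 ≤ v x σ)
    (hγpos : ∀ t ∈ Set.Icc 0 T, 0 < γ t)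
    (hu : ∀ x t, u x t = v x (s t) / γ t)
    (hs' : ∀ t ∈ Set.Icc 0 T, HasDerivAt s (γ t ^ ((q + 1) * p / n)) t)
    (hγ' : ∀ t ∈ Set.Icc 0 T,
      HasDerivAt γ (-(1 / q) * γ t * ∫ x in Ω, ‖gradient (fun z => u z t) x‖ ^ p) t)
    (hv : ∀ x σ, HasDerivAt (fun σ => v x σ ^ q) (pLap p (fun z => v z σ) x) σ) :
    ∀ x, ∀ t ∈ Set.Icc 0 T,
      HasDerivAt (fun τ => u x τ ^ q)
        (pLap p (fun z => u z t) x +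
          (∫ x in Ω, ‖gradient (fun z => u z t) x‖ ^ p) * u x t ^ q) t :=
  intrinsic_scaling_transforms_general n p q T hp hpn hq Ω v u γ s hvnn hγpos hu hs' hγ' hv
end
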